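/- At any interior stationary point of the Lagrangian J(l,μ) = ∑ᵢ log₂(1 + P₁ᵢ/(σ² + Iq_i)) + μ(D − ∑ᵢ l_i) with Iq_i = N·P₂ᵢ·c·2^{-2l_i}, the quantity (Iq_i · P₁ᵢ) / ((Iq_i + σ²)(P₁ᵢ + Iq_i + σ²)) takes the same value A for every user i. -/

import Mathlib

/-!
Only the `i`-th summand of the rate and the `-μ l_i` term of `J` depend on `l_i`. Since
`d Iq_i / d l_i = -2 log 2 · Iq_i`, differentiating the `i`-th rate gives
`2 Iq_i P₁ᵢ / ((Iq_i + σ²)(P₁ᵢ + Iq_i + σ²))`, so stationarity in `l_i` says that this quantity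
equals `μ`, whence `A = μ / 2`.
-/

open Real Function

theorem hasDerivAt_sum_update {ι : Type*} [Fintype ι] [DecidableEq ι] (F : ι → ℝ → ℝ)
    (l : ι → ℝ) (i : ι) {d : ℝ} (h : HasDerivAt (F i) d (l i)) :
    HasDerivAt (fun t => ∑ j, F j (update l i t j)) d (l i) := by
  have hterm : ∀ j ∈ Finset.univ,
      HasDerivAt (fun t => F j (update l i t j)) ((Pi.single i d : ι → ℝ) j) (l i) := by
    intro j _
    rcases eq_or_ne j i with rfl | hji
    · simpa using h
    · simpa [update_of_ne hji, hji] using hasDerivAt_const (l i) (F j (l j))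
  simpa using HasDerivAt.fun_sum hterm

theorem hasDerivAt_rpow_neg_two_mul {b : ℝ} (hb : 0 < b) (x : ℝ) :
    HasDerivAt (fun t => b ^ (-(2 * t))) (-2 * log b * b ^ (-(2 * x))) x := by
  have hlin : HasDerivAt (fun t : ℝ => -(2 * t)) (-2) x := by
    simpa using ((hasDerivAt_id x).const_mul 2).fun_neg
  exact (hlin.const_rpow hb).congr_deriv (by ring)

theorem HasDerivAt.logb_one_add_div {u : ℝ → ℝ} {u' x : ℝ} (b P : ℝ) (hu : HasDerivAt u u' x)
    (hu₀ : u x ≠ 0) (huP : u x + P ≠ 0) :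
    HasDerivAt (fun t => logb b (1 + P / u t)) (-(P * u') / (Real.log b * (u x * (u x + P)))) x := by
  have hv : HasDerivAt (fun t => 1 + P / u t) (-(P * u') / u x ^ 2) x := by
    simpa using ((hasDerivAt_const x P).div hu hu₀).const_add 1
  have hv₀ : 1 + P / u x ≠ 0 := by
    rwa [one_add_div hu₀, div_ne_zero_iff, and_iff_left hu₀]
  refine ((hv.log hv₀).div_const (Real.log b)).congr_deriv ?_
  field_simp

theorem stmt_7_general (N : ℕ) (P1 P2 : Fin N → ℝ) (σ2 c D : ℝ)
    (hP1 : ∀ i, 0 < P1 i) (hP2 : ∀ i, 0 < P2 i) (hσ : 0 < σ2) (hc : 0 < c)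
    (Iq : Fin N → ℝ → ℝ)
    (hIq : ∀ i t, Iq i t = (N : ℝ) * P2 i * c * (2 : ℝ) ^ (-(2 * t)))
    (J : (Fin N → ℝ) → ℝ → ℝ)
    (hJ : ∀ l m, J l m =
      (∑ i, Real.logb 2 (1 + P1 i / (σ2 + Iq i (l i)))) + m * (D - ∑ i, l i))
    (l : Fin N → ℝ) (m : ℝ)
    (hstat : ∀ i, deriv (fun t => J (Function.update l i t) m) (l i) = 0) :
    ∃ A : ℝ, ∀ i,
      Iq i (l i) * P1 i / ((Iq i (l i) + σ2) * (P1 i + Iq i (l i) + σ2)) = A := by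
  refine ⟨m / 2, fun i => ?_⟩
  have hP1i := hP1 i
  have hq : 0 < Iq i (l i) := by
    have : (0 : ℝ) < N := by exact_mod_cast i.pos
    have := hP2 i
    rw [hIq]
    positivity
  have hIq' : HasDerivAt (Iq i) (-2 * log 2 * Iq i (l i)) (l i) := by
    rw [funext (hIq i)]
    exact ((hasDerivAt_rpow_neg_two_mul two_pos (l i)).const_mul _).congr_deriv (by ring)
  have hrate := HasDerivAt.logb_one_add_div 2 (P1 i) (hIq'.const_add σ2)
    (by positivity) (by positivity)
  have hderiv : HasDerivAt (fun t => J (update l i t) m)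
      (2 * (Iq i (l i) * P1 i / ((Iq i (l i) + σ2) * (P1 i + Iq i (l i) + σ2))) - m) (l i) := by
    simp only [hJ]
    refine ((hasDerivAt_sum_update (fun j t => logb 2 (1 + P1 j / (σ2 + Iq j t))) l i
      hrate).fun_add (((hasDerivAt_sum_update (fun _ t => t) l i
        (hasDerivAt_id (l i))).const_sub D).const_mul m)).congr_deriv ?_
    field_simp
    ring
  linarith [hderiv.deriv.symm.trans (hstat i)]

theorem stmt_7 (N : ℕ) (hN : 1 ≤ N) (P1 P2 : Fin N → ℝ) (σ2 c D : ℝ)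
    (hP1 : ∀ i, 0 < P1 i) (hP2 : ∀ i, 0 < P2 i) (hσ : 0 < σ2) (hc : 0 < c)
    (hD : 0 < D)
    (Iq : Fin N → ℝ → ℝ)
    (hIq : ∀ i t, Iq i t = (N : ℝ) * P2 i * c * (2 : ℝ) ^ (-(2 * t)))
    (J : (Fin N → ℝ) → ℝ → ℝ)
    (hJ : ∀ l m, J l m =
      (∑ i, Real.logb 2 (1 + P1 i / (σ2 + Iq i (l i)))) + m * (D - ∑ i, l i))
    (l : Fin N → ℝ) (m : ℝ)
    (hl : ∀ i, 0 < l i)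
    (hstat : ∀ i, deriv (fun t => J (Function.update l i t) m) (l i) = 0)
    (hstatμ : deriv (fun t => J l t) m = 0) :
    ∃ A : ℝ, ∀ i,
      Iq i (l i) * P1 i / ((Iq i (l i) + σ2) * (P1 i + Iq i (l i) + σ2)) = A :=
  stmt_7_general N P1 P2 σ2 c D hP1 hP2 hσ hc Iq hIq J hJ l m hstat
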